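/- Let (ω_t)_{t≥0} be i.i.d. real-valued random variables taking values in [0,1] with common mean μ, and let (α_t)_{t≥0} be a sequence of reals with α_t ∈ (0,1) for all t, Σ_t α_t = ∞ and Σ_t α_t² < ∞. Define Γ_0 = γ0 for a deterministic γ0 ∈ [0,1] and Γ_{t+1} = (1−α_t)·Γ_t + α_t·ω_t. Then Γ_t converges to μ in L², i.e. E[(Γ_t − μ)²] → 0 as t → ∞. -/

import Mathlib

/-!
Write `e t = 𝔼[(Γ t - μ)²]`. Since `Γ t` is a function of `ω 0, …, ω (t-1)`, it is independent of
`ω t`, so the cross term vanishes and `e (t+1) = (1 - α t)² e t + (α t)² Var[ω t]`, which is at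
most `(1 - α t) e t + (α t)² / 4` by Popoviciu's inequality. A nonnegative sequence with
`e (t+1) ≤ (1 - α t) e t + b t`, `∑ b t < ∞` and `∑ α t = ∞` tends to `0`: unrolling from `N`
bounds `e n` by `e N ∏_{N ≤ i < n} (1 - α i) + ∑_{i ≥ N} b i`, and the product is at most
`exp (-∑_{N ≤ i < n} α i) → 0`.
-/

open MeasureTheory ProbabilityTheory Filter Topology Finset

section Deterministic

variable {α b e : ℕ → ℝ}

theorem le_prod_Ico_mul_add_sum_Ico (hα : ∀ t, α t ∈ Set.Icc 0 1) (hb : ∀ t, 0 ≤ b t)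
    (hrec : ∀ t, e (t + 1) ≤ (1 - α t) * e t + b t) {N n : ℕ} (hNn : N ≤ n) :
    e n ≤ (∏ i ∈ Ico N n, (1 - α i)) * e N + ∑ i ∈ Ico N n, b i := by
  induction n, hNn using Nat.le_induction with
  | base => simp
  | succ n hNn ih =>
    obtain ⟨hα0, hα1⟩ := hα n
    have hsum : 0 ≤ ∑ i ∈ Ico N n, b i := sum_nonneg fun i _ => hb i
    rw [prod_Ico_succ_top hNn, sum_Ico_succ_top hNn]
    calc e (n + 1) ≤ (1 - α n) * e n + b n := hrec n
      _ ≤ (1 - α n) * ((∏ i ∈ Ico N n, (1 - α i)) * e N + ∑ i ∈ Ico N n, b i) + b n := by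
        gcongr
      _ ≤ _ := by nlinarith

theorem tendsto_prod_Ico_one_sub_of_not_summable (hα : ∀ t, α t ∈ Set.Icc 0 1)
    (hdiv : ¬ Summable α) (N : ℕ) :
    Tendsto (fun n => ∏ i ∈ Ico N n, (1 - α i)) atTop (𝓝 0) := by
  have hpartial : Tendsto (fun n => ∑ i ∈ range n, α i) atTop atTop :=
    (not_summable_iff_tendsto_nat_atTop_of_nonneg fun i => (hα i).1).1 hdiv
  have hexp : Tendsto (fun n => Real.exp (-(∑ i ∈ range n, α i - ∑ i ∈ range N, α i)))
      atTop (𝓝 0) :=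
    Real.tendsto_exp_atBot.comp <| tendsto_neg_atTop_atBot.comp <|
      tendsto_atTop_add_const_right _ _ hpartial
  refine squeeze_zero' (Eventually.of_forall fun n => prod_nonneg fun i _ => ?_) ?_ hexp
  · linarith [(hα i).2]
  filter_upwards [eventually_ge_atTop N] with n hNn
  rw [← sum_Ico_eq_sub _ hNn, ← sum_neg_distrib, Real.exp_sum]
  exact prod_le_prod (fun i _ => by linarith [(hα i).2]) fun i _ => Real.one_sub_le_exp_neg _

theorem tendsto_zero_of_le_one_sub_mul_add (hα : ∀ t, α t ∈ Set.Icc 0 1) (hdiv : ¬ Summable α)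
    (hb : ∀ t, 0 ≤ b t) (hbsum : Summable b) (he : ∀ t, 0 ≤ e t)
    (hrec : ∀ t, e (t + 1) ≤ (1 - α t) * e t + b t) :
    Tendsto e atTop (𝓝 0) := by
  refine tendsto_order.2 ⟨fun a ha => .of_forall fun n => ha.trans_le (he n), fun ε hε => ?_⟩
  have htail : Tendsto (fun N => ∑' i, b i - ∑ i ∈ range N, b i) atTop (𝓝 0) := by
    simpa using (hbsum.hasSum.tendsto_sum_nat).const_sub (∑' i, b i)
  obtain ⟨N, hN⟩ := ((tendsto_order.1 htail).2 (ε / 2) (by positivity)).exists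
  have hprod := (tendsto_prod_Ico_one_sub_of_not_summable hα hdiv N).mul_const (e N)
  rw [zero_mul] at hprod
  filter_upwards [eventually_ge_atTop N, (tendsto_order.1 hprod).2 (ε / 2) (by positivity)]
    with n hNn hsmall
  have htail_le : ∑ i ∈ Ico N n, b i ≤ ∑' i, b i - ∑ i ∈ range N, b i := by
    rw [sum_Ico_eq_sub _ hNn]
    linarith [hbsum.sum_le_tsum (range n) fun i _ => hb i]
  linarith [le_prod_Ico_mul_add_sum_Ico hα hb hrec hNn]

end Deterministic

theorem measurable_iSup_lt_comap_of_rec {Ω : Type*} {ω Γ : ℕ → Ω → ℝ} {α : ℕ → ℝ} {γ0 : ℝ}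
    (hΓ0 : ∀ x, Γ 0 x = γ0) (hΓ : ∀ t x, Γ (t + 1) x = (1 - α t) * Γ t x + α t * ω t x)
    (t : ℕ) : Measurable[⨆ i < t, MeasurableSpace.comap (ω i) inferInstance] (Γ t) := by
  induction t with
  | zero =>
    rw [funext hΓ0]
    exact measurable_const
  | succ t ih =>
    rw [funext (hΓ t)]
    have hmono : (⨆ i < t, MeasurableSpace.comap (ω i) inferInstance) ≤
        ⨆ i < t + 1, MeasurableSpace.comap (ω i) inferInstance :=
      biSup_mono fun i hi => hi.trans t.lt_succ_self
    have hω : Measurable[⨆ i < t + 1, MeasurableSpace.comap (ω i) inferInstance] (ω t) :=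
      (comap_measurable (ω t)).mono
        (le_biSup (fun i => MeasurableSpace.comap (ω i) inferInstance) t.lt_succ_self) le_rfl
    exact ((ih.mono hmono le_rfl).const_mul _).add (hω.const_mul _)

namespace ProbabilityTheory

variable {Ω : Type*} [MeasurableSpace Ω] {P : Measure Ω}

theorem iIndepFun.indepFun_of_measurable_iSup_lt {ι β γ : Type*} [LinearOrder ι]
    [mβ : MeasurableSpace β] [MeasurableSpace γ] {f : ι → Ω → β} (hf : ∀ i, Measurable (f i))
    (hind : iIndepFun f P) {X : Ω → γ} {t : ι}
    (hX : Measurable[⨆ i < t, mβ.comap (f i)] X) :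
    IndepFun X (f t) P := by
  have h := indep_iSup_of_disjoint (fun i => (hf i).comap_le) hind.iIndep
    (S := Set.Iio t) (T := {t}) (by simp)
  rw [_root_.iSup_singleton] at h
  exact (IndepFun_iff_Indep _ _ _).2 (indep_of_indep_of_le_left h hX.comap_le)

theorem IndepFun.integral_add_sq_of_integral_eq_zero {X Y : Ω → ℝ} (hXY : IndepFun X Y P)
    (hX : MemLp X 2 P) (hY : MemLp Y 2 P) (hY0 : ∫ x, Y x ∂P = 0) :
    ∫ x, (X x + Y x) ^ 2 ∂P = ∫ x, X x ^ 2 ∂P + ∫ x, Y x ^ 2 ∂P := by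
  have hcross : ∫ x, X x * Y x ∂P = 0 := by
    rw [← Pi.mul_def, hXY.integral_mul_eq_mul_integral hX.aestronglyMeasurable
      hY.aestronglyMeasurable, hY0, mul_zero]
  have hXY_int : Integrable (fun x => 2 * (X x * Y x)) P := (hX.integrable_mul hY).const_mul 2
  simp_rw [add_sq, mul_assoc]
  rw [integral_add (f := fun x => X x ^ 2 + 2 * (X x * Y x)) (hX.integrable_sq.add hXY_int)
      hY.integrable_sq, integral_add hX.integrable_sq hXY_int, integral_const_mul, hcross,
    mul_zero, add_zero]

variable [IsProbabilityMeasure P]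

theorem IndepFun.integral_sq_one_sub_mul_add_mul_sub {X Y : Ω → ℝ} (hXY : IndepFun X Y P)
    (hX : MemLp X 2 P) (hY : MemLp Y 2 P) {m : ℝ} (hm : ∫ x, Y x ∂P = m) (a : ℝ) :
    ∫ x, ((1 - a) * X x + a * Y x - m) ^ 2 ∂P =
      (1 - a) ^ 2 * ∫ x, (X x - m) ^ 2 ∂P + a ^ 2 * variance Y P := by
  have hindep : IndepFun (fun x => (1 - a) * (X x - m)) (fun x => a * (Y x - m)) P :=
    hXY.comp (φ := fun y => (1 - a) * (y - m)) (ψ := fun y => a * (y - m))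
      (by fun_prop) (by fun_prop)
  have hcentered : ∫ x, a * (Y x - m) ∂P = 0 := by
    rw [integral_const_mul, integral_sub (hY.integrable one_le_two) (integrable_const m), hm]
    simp
  calc ∫ x, ((1 - a) * X x + a * Y x - m) ^ 2 ∂P
      = ∫ x, ((1 - a) * (X x - m) + a * (Y x - m)) ^ 2 ∂P := by congr 1; ext x; ring
    _ = ∫ x, ((1 - a) * (X x - m)) ^ 2 ∂P + ∫ x, (a * (Y x - m)) ^ 2 ∂P :=
      hindep.integral_add_sq_of_integral_eq_zero
        ((hX.sub (memLp_const m)).const_mul _) ((hY.sub (memLp_const m)).const_mul _) hcentered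
    _ = (1 - a) ^ 2 * ∫ x, (X x - m) ^ 2 ∂P + a ^ 2 * variance Y P := by
      simp_rw [mul_pow, integral_const_mul]
      rw [variance_eq_integral hY.aestronglyMeasurable.aemeasurable, hm]

end ProbabilityTheory

theorem gaussian_weights_L2_convergence_general
    {Ω : Type*} [MeasurableSpace Ω] (P : Measure Ω) [IsProbabilityMeasure P]
    (ω : ℕ → Ω → ℝ) (hmeas : ∀ t, Measurable (ω t))
    (hindep : iIndepFun ω P)
    (hrange : ∀ t, ∀ᵐ x ∂P, ω t x ∈ Set.Icc (0 : ℝ) 1)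
    (μ : ℝ) (hmean : ∀ t, ∫ x, ω t x ∂P = μ)
    (α : ℕ → ℝ) (hα : ∀ t, α t ∈ Set.Ioo (0 : ℝ) 1)
    (hdiv : ¬ Summable α) (hsq : Summable (fun t => (α t) ^ 2))
    (γ0 : ℝ)
    (Γ : ℕ → Ω → ℝ) (hΓ0 : ∀ x, Γ 0 x = γ0)
    (hΓ : ∀ t x, Γ (t + 1) x = (1 - α t) * Γ t x + α t * ω t x) :
    Tendsto (fun t => ∫ x, (Γ t x - μ) ^ 2 ∂P) atTop (nhds 0) := by
  have hωL2 (t : ℕ) : MemLp (ω t) 2 P := by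
    refine MemLp.of_bound (hmeas t).aestronglyMeasurable 1 ?_
    filter_upwards [hrange t] with x hx
    rw [Real.norm_eq_abs, abs_le]
    constructor <;> linarith [hx.1, hx.2]
  have hΓL2 (t : ℕ) : MemLp (Γ t) 2 P := by
    induction t with
    | zero => rw [funext hΓ0]; exact memLp_const γ0
    | succ t ih => rw [funext (hΓ t)]; exact (ih.const_mul _).add ((hωL2 t).const_mul _)
  have hstep (t : ℕ) : ∫ x, (Γ (t + 1) x - μ) ^ 2 ∂P ≤
      (1 - α t) * ∫ x, (Γ t x - μ) ^ 2 ∂P + α t ^ 2 / 4 := by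
    have hvar : variance (ω t) P ≤ 1 / 4 :=
      (variance_le_sq_of_bounded (hrange t) (hmeas t).aemeasurable).trans_eq (by norm_num)
    have hΓω : IndepFun (Γ t) (ω t) P :=
      hindep.indepFun_of_measurable_iSup_lt hmeas (measurable_iSup_lt_comap_of_rec hΓ0 hΓ t)
    simp only [hΓ t]
    rw [hΓω.integral_sq_one_sub_mul_add_mul_sub (hΓL2 t) (hωL2 t) (hmean t)]
    obtain ⟨hα0, hα1⟩ := hα t
    have he : 0 ≤ ∫ x, (Γ t x - μ) ^ 2 ∂P := integral_nonneg fun x => sq_nonneg _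
    nlinarith [mul_nonneg (mul_nonneg (sub_nonneg.2 hα1.le) hα0.le) he,
      mul_le_mul_of_nonneg_left hvar (sq_nonneg (α t))]
  exact tendsto_zero_of_le_one_sub_mul_add (fun t => Set.Ioo_subset_Icc_self (hα t)) hdiv
    (fun t => by positivity) (hsq.div_const 4) (fun t => integral_nonneg fun x => sq_nonneg _)
    hstep

/-- FedGWC Theorem 1 (L² convergence): for i.i.d. rewards `ω t` in `[0,1]` with mean `μ`
and Robbins–Monro step sizes `α t ∈ (0,1)` with `∑ α t = ∞` and `∑ (α t)² < ∞`, the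
Gaussian weight process `Γ (t+1) = (1 - α t) * Γ t + α t * ω t`, `Γ 0 = γ0`, converges
to `μ` in `L²`, i.e. `E[(Γ t - μ)²] → 0`. -/
theorem gaussian_weights_L2_convergence
    {Ω : Type*} [MeasurableSpace Ω] (P : Measure Ω) [IsProbabilityMeasure P]
    (ω : ℕ → Ω → ℝ) (hmeas : ∀ t, Measurable (ω t))
    (hindep : iIndepFun ω P)
    (hident : ∀ t, IdentDistrib (ω t) (ω 0) P P)
    (hrange : ∀ t, ∀ᵐ x ∂P, ω t x ∈ Set.Icc (0 : ℝ) 1)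
    (μ : ℝ) (hmean : ∀ t, ∫ x, ω t x ∂P = μ)
    (α : ℕ → ℝ) (hα : ∀ t, α t ∈ Set.Ioo (0 : ℝ) 1)
    (hdiv : ¬ Summable α) (hsq : Summable (fun t => (α t) ^ 2))
    (γ0 : ℝ) (hγ0 : γ0 ∈ Set.Icc (0 : ℝ) 1)
    (Γ : ℕ → Ω → ℝ) (hΓ0 : ∀ x, Γ 0 x = γ0)
    (hΓ : ∀ t x, Γ (t + 1) x = (1 - α t) * Γ t x + α t * ω t x) :
    Tendsto (fun t => ∫ x, (Γ t x - μ) ^ 2 ∂P) atTop (nhds 0) :=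
  gaussian_weights_L2_convergence_general P ω hmeas hindep hrange μ hmean α hα hdiv hsq γ0 Γ hΓ0 hΓ
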